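/- arXiv:2211.07923 — 5 statements merged into one kernel-verified Lean document; each statement's English description precedes it below -/
import Mathlib

section
/- Let F = (f_1, ..., f_n) be an n-node deterministic DT-BFDS that updates in parallel, where every f_i is a positive unary function (i.e., there is a map σ : Fin n → Fin n with f_i(c) = c(σ(i))). Define the (2n)-node sequential system G on configurations of length 2n that, in order, first updates nodes n+1,...,2n by setting node (n+i) to f_i applied to the states of nodes 1..n, and then updates nodes 1,...,n by copying from nodes n+1,...,2n. Then for all configurations c of F and all t ≥ 0, applying G for t steps to the doubled configuration c·c yields (F^[t] c)·(F^[t] c). In particular, G simulates F with edge expansion rate 1. -/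
/-- The doubled configuration `c·c`. -/
def dbl {n : ℕ} (c : Fin n → Bool) : Fin n ⊕ Fin n → Bool := Sum.elim c c

/-- First phase of the sequential system `G`: update the second-half nodes
`n+1, …, 2n`, setting node `n+i` to `f_i` applied to the first-half states. -/
def seqStep1 {n : ℕ} (σ : Fin n → Fin n) (c : Fin n ⊕ Fin n → Bool) :
    Fin n ⊕ Fin n → Bool :=
  Sum.elim (fun i => c (Sum.inl i)) (fun i => c (Sum.inl (σ i)))

/-- Second phase of the sequential system `G`: update nodes `1, …, n`
by copying from nodes `n+1, …, 2n`. -/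
def seqStep2 {n : ℕ} (c : Fin n ⊕ Fin n → Bool) : Fin n ⊕ Fin n → Bool :=
  Sum.elim (fun i => c (Sum.inr i)) (fun i => c (Sum.inr i))

theorem seqStep2_seqStep1_dbl {n : ℕ} (σ : Fin n → Fin n) (c : Fin n → Bool) :
    seqStep2 (seqStep1 σ (dbl c)) = dbl (c ∘ σ) := by
  funext x
  cases x <;> rfl

theorem stmt_7 (n : ℕ) (σ : Fin n → Fin n)
    (F : (Fin n → Bool) → (Fin n → Bool)) (hF : ∀ c i, F c i = c (σ i))
    (G : (Fin n ⊕ Fin n → Bool) → (Fin n ⊕ Fin n → Bool))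
    (hG : ∀ c, G c = seqStep2 (seqStep1 σ c)) :
    ∀ (t : ℕ) (c : Fin n → Bool), G^[t] (dbl c) = dbl (F^[t] c) := by
  have hdbl : Function.Semiconj dbl F G := fun c => by
    rw [hG, seqStep2_seqStep1_dbl]
    exact congrArg dbl (funext (hF c))
  exact fun t c => (hdbl.iterate_right t c).symm
end

section
/- Let F = {f_{i,j} : i ∈ [n], j ∈ [k]} be an (n,k) multiple-choice DT-BFDS in which every f_{i,j} is a unary function (positive or negative) of a single variable. Define the doubled system G on 2n nodes using only positive unary functions as follows: if f_{i,j}(x) = x_ℓ then node i of G reads node ℓ and node n+i reads node n+ℓ; if f_{i,j}(x) = ¬x_ℓ then node i of G reads node n+ℓ and node n+i reads node ℓ. Let ν(c) = c·c' where c' is the bitwise negation of c. Then for every function-index selection J ∈ [k]^n, one parallel step of F with selection J on c corresponds exactly to one parallel step of G with selection J on ν(c); i.e., ν(F[J](c)) = G[J](ν(c)). -/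
theorem stmt_8 (n k : ℕ)
    -- the source node and the sign (`true` = negative unary) of each choice function
    (src : Fin n → Fin k → Fin n) (neg : Fin n → Fin k → Bool)
    -- one parallel step of `F` with function selection `J`
    (Fstep : (Fin n → Fin k) → (Fin n → Bool) → (Fin n → Bool))
    (hF : ∀ J c i, Fstep J c i =
      if neg i (J i) then !c (src i (J i)) else c (src i (J i)))
    -- one parallel step of the doubled positive-unary system `G` with selection `J`
    (Gstep : (Fin n → Fin k) → (Fin n ⊕ Fin n → Bool) → (Fin n ⊕ Fin n → Bool))
    (hGl : ∀ J d i, Gstep J d (Sum.inl i) =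
      if neg i (J i) then d (Sum.inr (src i (J i))) else d (Sum.inl (src i (J i))))
    (hGr : ∀ J d i, Gstep J d (Sum.inr i) =
      if neg i (J i) then d (Sum.inl (src i (J i))) else d (Sum.inr (src i (J i))))
    -- the embedding ν(c) = c·c' with c' the bitwise negation of c
    (ν : (Fin n → Bool) → (Fin n ⊕ Fin n → Bool))
    (hν : ∀ c, ν c = Sum.elim c (fun i => !c i)) :
    ∀ (J : Fin n → Fin k) (c : Fin n → Bool), ν (Fstep J c) = Gstep J (ν c) := by
  intro J c
  funext x
  rcases x with i | i
  · simp only [hν, hF, hGl, Sum.elim_inl, Sum.elim_inr]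
  · simp only [hν, hF, hGr, Sum.elim_inl, Sum.elim_inr]
    cases neg i (J i) <;> simp only [Bool.not_not, Bool.false_eq_true, if_true, if_false]
end

section
/- Consider n ≥ 4 nodes with state variables x_1, ..., x_n and the 2-choice unary system with individual function selection and parallel updates where: for 3 ≤ i ≤ n both choices for node i copy x_{i-1}; node 1 can copy either x_1 or x_n; node 2 can copy either x_n or x_1. Then for any two configurations c and d that are each neither all-zeros nor all-ones, d is reachable from c by some finite sequence of update steps (each step choosing one function per node and updating all nodes in parallel). Moreover, the all-zeros and all-ones configurations are fixed under every choice of updates. -/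
/-!
Choosing `x_n` for node 1 and `x_1` for node 2 rotates the configuration by one place, so
configurations can be rotated freely. A non-constant configuration contains a `true` followed
cyclically by a `false`; rotating them to nodes `n` and `1` and letting nodes 1 and 2 both copy
the `false` at node 1 destroys that `true` without creating a new one. Repeating this leaves a
single `true`, which is rotated to node 1. From there node 1 keeps its `true` and node 2 copies
`true` (from node 1) or `false` (from node `n`, which stays `false` for `n - 1` steps), so any word
can be shifted into nodes `2, …, n`; a final rotation moves the `true` of the target into place.
Constant configurations are fixed because every choice function copies some coordinate.
-/

open Finset Relation

theorem card_filter_comp_sub {G : Type*} [AddGroup G] [Fintype G] (c : G → Bool) (t : G) :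
    #{i | c (i - t) = true} = #{i | c i = true} :=
  card_equiv (Equiv.subRight t) (by simp)

theorem card_filter_update_false_add_one {α : Type*} [Fintype α] [DecidableEq α]
    (g : α → Bool) {a : α} (ha : g a = true) :
    #{i | Function.update g a false i = true} + 1 = #{i | g i = true} := by
  have : ({i | Function.update g a false i = true} : Finset α) =
      ({i | g i = true} : Finset α).erase a := by
    ext i
    by_cases h : i = a <;> simp [h, Function.update_apply]
  rw [this, card_erase_add_one (by simpa using ha)]

theorem exists_eq_true_and_succ_eq_false {m : ℕ} (c : Fin (m + 1) → Bool) {p q : Fin (m + 1)}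
    (hp : c p = true) (hq : c q = false) : ∃ j, c j = true ∧ c (j + 1) = false := by
  by_contra! h
  have hclosed : ∀ j, c j = true → c (j + 1) = true := fun j hj => by simpa using h j hj
  have hall : ∀ t, c (p + t) = true := by
    refine Fin.induction (by simpa using hp) fun t ht => ?_
    rw [← Fin.coeSucc_eq_succ, ← add_assoc]
    exact hclosed _ ht
  simpa [hq] using hall (q - p)

variable {n : ℕ}

/-- Node `i + 1` of the system is index `i` here, so node `n` is `-1`. -/
def RingStep (c d : Fin (n + 2) → Bool) : Prop :=
  (d 0 = c 0 ∨ d 0 = c (-1)) ∧ (d 1 = c 0 ∨ d 1 = c (-1)) ∧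
    ∀ i, i ≠ 0 → i ≠ 1 → d i = c (i - 1)

theorem ringStep_iff_exists_selection
    (f : Fin (n + 2) → Fin 2 → (Fin (n + 2) → Bool) → Bool)
    (hcopy : ∀ i, i ≠ 0 → i ≠ 1 → ∀ j c, f i j c = c (i - 1))
    (h00 : ∀ c, f 0 0 c = c 0) (h01 : ∀ c, f 0 1 c = c (-1))
    (h10 : ∀ c, f 1 0 c = c (-1)) (h11 : ∀ c, f 1 1 c = c 0) (c d : Fin (n + 2) → Bool) :
    RingStep c d ↔ ∃ J : Fin (n + 2) → Fin 2, ∀ i, d i = f i (J i) c := by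
  constructor
  · rintro ⟨hd0, hd1, hd⟩
    obtain ⟨J₀, hJ₀⟩ : ∃ j, d 0 = f 0 j c := by
      rcases hd0 with h | h
      exacts [⟨0, by rw [h, h00]⟩, ⟨1, by rw [h, h01]⟩]
    obtain ⟨J₁, hJ₁⟩ : ∃ j, d 1 = f 1 j c := by
      rcases hd1 with h | h
      exacts [⟨1, by rw [h, h11]⟩, ⟨0, by rw [h, h10]⟩]
    refine ⟨fun i => if i = 0 then J₀ else if i = 1 then J₁ else 0, fun i => ?_⟩
    by_cases hi0 : i = 0
    · subst hi0; simpa using hJ₀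
    by_cases hi1 : i = 1
    · subst hi1; simpa using hJ₁
    simp only [hi0, hi1, if_false, hcopy i hi0 hi1, hd i hi0 hi1]
  · rintro ⟨J, hJ⟩
    refine ⟨?_, ?_, fun i hi0 hi1 => by rw [hJ, hcopy i hi0 hi1]⟩
    · rw [hJ]; generalize J 0 = j; fin_cases j <;> simp [h00, h01]
    · rw [hJ]; generalize J 1 = j; fin_cases j <;> simp [h10, h11]

theorem RingStep.eq_const {b : Bool} {d : Fin (n + 2) → Bool} (h : RingStep (fun _ => b) d) :
    d = fun _ => b := by
  obtain ⟨hd0, hd1, hd⟩ := h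
  funext i
  by_cases hi0 : i = 0
  · subst hi0; simpa using hd0
  by_cases hi1 : i = 1
  · subst hi1; simpa using hd1
  exact hd i hi0 hi1

theorem ringStep_rotate (c : Fin (n + 2) → Bool) : RingStep c fun i => c (i - 1) :=
  ⟨Or.inr (by simp), Or.inl (by simp), fun _ _ _ => rfl⟩

theorem reflTransGen_ringStep_rotate (c : Fin (n + 2) → Bool) (t : Fin (n + 2)) :
    ReflTransGen RingStep c fun i => c (i - t) := by
  induction t using Fin.induction with
  | zero => simpa using ReflTransGen.refl
  | succ t ih =>
    simp only [← Fin.coeSucc_eq_succ, sub_add_eq_sub_sub_swap]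
    exact ih.tail (ringStep_rotate _)

theorem ringStep_update_rotate {c : Fin (n + 2) → Bool} (hc : c 0 = false) :
    RingStep c (Function.update (fun i => c (i - 1)) 0 false) :=
  ⟨Or.inl (by simp [hc]), Or.inl (by simp), fun i hi0 _ => by simp [hi0]⟩

theorem reflTransGen_ringStep_to_indicator_zero {c : Fin (n + 2) → Bool}
    (hct : ∃ i, c i = true) (hcf : ∃ i, c i = false) :
    ReflTransGen RingStep c fun i => decide (i = 0) := by
  induction h : #{i | c i = true} using Nat.strong_induction_on generalizing c with
  | _ k ih =>
  obtain ⟨p, hp⟩ := hct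
  obtain ⟨q, hq⟩ := hcf
  by_cases hk : k = 1
  · obtain ⟨p', hp'⟩ := card_eq_one.1 (h.trans hk)
    have hc : ∀ i, c i = true ↔ i = p' := by simpa [Finset.ext_iff] using hp'
    convert reflTransGen_ringStep_rotate c (-p') using 2 with i
    rw [Bool.eq_iff_iff]
    simp [hc]
  obtain ⟨j, hj, hj1⟩ := exists_eq_true_and_succ_eq_false c hp hq
  have hrot := reflTransGen_ringStep_rotate c (-(j + 1))
  generalize hc' : (fun i => c (i - -(j + 1))) = c' at hrot
  have hc'0 : c' 0 = false := by simpa [← hc'] using hj1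
  have hc'last : c' (-1) = true := by
    rw [← hc']
    show c (-1 - -(j + 1)) = true
    rwa [show (-1 : Fin (n + 2)) - -(j + 1) = j by abel]
  have hstep := ringStep_update_rotate hc'0
  generalize hd : Function.update (fun i => c' (i - 1)) 0 false = d at hstep
  have hcard : #{i | d i = true} + 1 = k := by
    rw [← hd, card_filter_update_false_add_one _ (by simpa using hc'last), card_filter_comp_sub,
      ← hc', card_filter_comp_sub, h]
  have hdt : ∃ i, d i = true := by
    have hk0 : 0 < k := h ▸ card_pos.2 ⟨p, by simpa using hp⟩
    obtain ⟨i, hi⟩ := card_pos.1 (show 0 < #{i | d i = true} by omega)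
    exact ⟨i, by simpa using hi⟩
  exact hrot.trans (.head hstep (ih _ (by omega) hdt ⟨0, by simp [← hd]⟩ rfl))

theorem reflTransGen_ringStep_from_indicator_zero {k : ℕ} (hk : k ≤ n + 1)
    {d : Fin (n + 2) → Bool} (hd0 : d 0 = true)
    (hd : ∀ i : Fin (n + 2), k < i.val → d i = false) :
    ReflTransGen RingStep (fun i => decide (i = 0)) d := by
  induction k generalizing d with
  | zero =>
    convert ReflTransGen.refl using 1
    funext i
    by_cases hi : i = 0
    · simp [hi, hd0]
    · simp [hi, hd i (Nat.pos_of_ne_zero (Fin.val_ne_iff.2 hi))]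
  | succ k ih =>
    -- `d` shifted back by one place, with `true` at `0` and `false` at `-1`
    set d' : Fin (n + 2) → Bool :=
      fun i => if i = 0 then true else if i.val ≤ k then d (i + 1) else false
    refine (ih (by omega) (d := d') (by simp [d']) (fun i hi => ?_)).tail ⟨?_, ?_, ?_⟩
    · have hi0 : i ≠ 0 := by rintro rfl; simp at hi
      simp [d', hi0, hi.not_ge]
    · simp [d', hd0]
    · have hlast : d' (-1) = false := by simp [d', Fin.coe_neg_one]; omega
      cases d 1
      · exact Or.inr hlast.symm
      · exact Or.inl (by simp [d'])
    · intro i hi0 hi1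
      have hval : (i - 1).val = i.val - 1 := by simp [Fin.coe_sub_one, hi0]
      by_cases hik : i.val ≤ k + 1
      · simp [d', sub_eq_zero, hi1, hval, show i.val - 1 ≤ k by omega]
      · simp [d', sub_eq_zero, hi1, hval, show ¬ i.val - 1 ≤ k by omega, hd i (by omega)]

theorem reflTransGen_ringStep {c d : Fin (n + 2) → Bool} (hct : ∃ i, c i = true)
    (hcf : ∃ i, c i = false) (hdt : ∃ i, d i = true) : ReflTransGen RingStep c d := by
  obtain ⟨p, hp⟩ := hdt
  have hbuild : ReflTransGen RingStep (fun i => decide (i = 0)) fun i => d (i + p) :=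
    reflTransGen_ringStep_from_indicator_zero le_rfl (by simpa using hp)
      fun i hi => absurd i.isLt (by omega)
  have hrot := reflTransGen_ringStep_rotate (fun i => d (i + p)) p
  simp only [sub_add_cancel] at hrot
  exact (reflTransGen_ringStep_to_indicator_zero hct hcf).trans (hbuild.trans hrot)

theorem stmt_9 (n : ℕ) (hn : 4 ≤ n)
    -- the two choice functions of each node
    (f : Fin n → Fin 2 → (Fin n → Bool) → Bool)
    (hcopy : ∀ (i : Fin n), 2 ≤ (i : ℕ) → ∀ (j : Fin 2) (c : Fin n → Bool),
      f i j c = c ⟨(i : ℕ) - 1, Nat.lt_of_le_of_lt (Nat.sub_le _ _) i.2⟩)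
    (h10 : ∀ c : Fin n → Bool, f ⟨0, by omega⟩ 0 c = c ⟨0, by omega⟩)
    (h11 : ∀ c : Fin n → Bool, f ⟨0, by omega⟩ 1 c = c ⟨n - 1, by omega⟩)
    (h20 : ∀ c : Fin n → Bool, f ⟨1, by omega⟩ 0 c = c ⟨n - 1, by omega⟩)
    (h21 : ∀ c : Fin n → Bool, f ⟨1, by omega⟩ 1 c = c ⟨0, by omega⟩)
    -- one parallel step with some individual selection of functions
    (Step : (Fin n → Bool) → (Fin n → Bool) → Prop)
    (hStep : ∀ c d, Step c d ↔ ∃ J : Fin n → Fin 2, ∀ i, d i = f i (J i) c) :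
    (∀ c d : Fin n → Bool,
        (∃ i, c i = true) → (∃ i, c i = false) →
        (∃ i, d i = true) → (∃ i, d i = false) →
        Relation.ReflTransGen Step c d) ∧
    (∀ d : Fin n → Bool, Step (fun _ => false) d → d = fun _ => false) ∧
    (∀ d : Fin n → Bool, Step (fun _ => true) d → d = fun _ => true) := by
  obtain ⟨m, rfl⟩ : ∃ m, n = m + 2 := ⟨n - 2, by omega⟩
  have hlast : (⟨m + 1, by omega⟩ : Fin (m + 2)) = -1 := Fin.ext (by simp [Fin.coe_neg_one])
  have hcopy' : ∀ i : Fin (m + 2), i ≠ 0 → i ≠ 1 → ∀ j c, f i j c = c (i - 1) := by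
    intro i hi0 hi1 j c
    have hi : 2 ≤ i.val := by
      have h0 : i.val ≠ 0 := Fin.val_ne_iff.2 hi0
      have h1 : i.val ≠ 1 := Fin.val_ne_iff.2 hi1
      omega
    rw [hcopy i hi j c]
    exact congrArg c (Fin.ext (by simp [Fin.coe_sub_one, hi0]))
  have hStep' : ∀ c d, Step c d ↔ RingStep c d := fun c d => by
    rw [hStep, ringStep_iff_exists_selection f hcopy' (by simpa using h10)
      (by simpa [hlast] using h11) (by simpa [hlast] using h20) (by simpa using h21)]
  exact ⟨fun c d hct hcf hdt _ =>
      ReflTransGen.mono (fun c d => (hStep' c d).2) c d (reflTransGen_ringStep hct hcf hdt),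
    fun d h => ((hStep' _ _).1 h).eq_const, fun d h => ((hStep' _ _).1 h).eq_const⟩
end

section
/- Let F be an (n,k) multiple-choice DT-BFDS with individual function selection. Then each step of the asynchronous schedule (where an arbitrary subset S of nodes is chosen, partitioned into groups updated one group at a time, with nodes in the same group updating concurrently) is simulated by at most n steps of the (n, k+1)-choice parallel system F' obtained by adding the identity function as the (k+1)-st choice for every node: for every asynchronous step taking configuration a to configuration b, there is a sequence of at most n parallel steps of F' taking a to b. -/
/-- `chain r l a b`: there is a sequence of exactly `l` steps of the relation `r`
leading from `a` to `b`. -/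
def chain {α : Type*} (r : α → α → Prop) : ℕ → α → α → Prop
  | 0 => fun a b => a = b
  | l + 1 => fun a b => ∃ c, r a c ∧ chain r l c b

/-- Update the nodes in the group `S` concurrently, using the selection `g`
of function indices, all other nodes keeping their states. -/
def applyGroup {n k : ℕ} (f : Fin n → Fin k → (Fin n → Bool) → Bool)
    (S : Finset (Fin n)) (g : Fin n → Fin k) (c : Fin n → Bool) : Fin n → Bool :=
  fun i => if i ∈ S then f i (g i) c else c i

/-- One asynchronous step of the `(n,k)` system `f`: a sequence of mutually
disjoint nonempty groups of nodes is chosen and the groups update one at a time,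
nodes within a group updating concurrently. -/
def AsyncStep {n k : ℕ} (f : Fin n → Fin k → (Fin n → Bool) → Bool)
    (a b : Fin n → Bool) : Prop :=
  ∃ (m : ℕ), m ≤ n ∧ ∃ S : Fin m → Finset (Fin n),
    (∀ h, (S h).Nonempty) ∧
    (∀ h h', h ≠ h' → Disjoint (S h) (S h')) ∧
    ∃ g : Fin n → Fin k,
      b = (List.ofFn S).foldl (fun c T => applyGroup f T g c) a

/-- One parallel step of the `(n, k+1)`-choice system `F'` obtained by adding
the identity function as the `(k+1)`-st choice for every node. -/
def PStep {n k : ℕ} (f : Fin n → Fin k → (Fin n → Bool) → Bool)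
    (a b : Fin n → Bool) : Prop :=
  ∃ J : Fin n → Fin (k + 1), ∀ i,
    b i = if h : (J i : ℕ) < k then f i ⟨J i, h⟩ a else a i

/-! Updating one group is a single parallel step of `F'` in which every node outside the group
selects the identity, so the `m ≤ n` group updates of an asynchronous step are `m` parallel steps. -/

theorem chain_length_foldl {α β : Type*} {r : α → α → Prop} {φ : α → β → α}
    (hφ : ∀ c x, r c (φ c x)) (L : List β) (a : α) : chain r L.length a (L.foldl φ a) := by
  induction L generalizing a with
  | nil => rfl
  | cons x L ih => exact ⟨φ a x, hφ a x, ih _⟩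

theorem pStep_applyGroup {n k : ℕ} (f : Fin n → Fin k → (Fin n → Bool) → Bool)
    (T : Finset (Fin n)) (g : Fin n → Fin k) (c : Fin n → Bool) :
    PStep f c (applyGroup f T g c) := by
  refine ⟨fun i => if i ∈ T then (g i).castSucc else Fin.last k, fun i => ?_⟩
  by_cases hi : i ∈ T <;> simp [applyGroup, hi]

theorem stmt_10 (n k : ℕ) (f : Fin n → Fin k → (Fin n → Bool) → Bool)
    (a b : Fin n → Bool) (h : AsyncStep f a b) :
    ∃ l : ℕ, l ≤ n ∧ chain (PStep f) l a b := by
  obtain ⟨m, hm, S, -, -, g, rfl⟩ := h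
  refine ⟨m, hm, ?_⟩
  simpa using chain_length_foldl (fun c T => pStep_applyGroup f T g c) (List.ofFn S) a
end

section
/- Let F = (f_1, ..., f_n) be an n-node system and π a permutation of Fin n. Define the sequential update F_π(c) = f̃_{π(n)}( ... f̃_{π(2)}(f̃_{π(1)}(c)) ... ), where f̃_i replaces only coordinate i of its input by f_i applied to that input. If the dependency structure is such that f_{π(j)} does not depend on any coordinate π(1), ..., π(j-1) for all j, then the sequential update agrees with the parallel update: F_π(c) = (f_1(c), ..., f_n(c)) for every configuration c. -/
/-- Sequential update according to the permutation `π`: apply the completions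
`f̃_{π 1}, f̃_{π 2}, …, f̃_{π n}` in this order, where the completion of `f_i`
replaces only coordinate `i` of its input by `f_i` applied to that input. -/
def seqUpdate {n : ℕ} (f : Fin n → (Fin n → Bool) → Bool) (π : Equiv.Perm (Fin n))
    (c : Fin n → Bool) : Fin n → Bool :=
  (List.ofFn (fun j : Fin n => π j)).foldl
    (fun c i => Function.update c i (f i c)) c

open Function

/- A completion `f̃_i` only changes coordinate `i`, which no later function reads, so every later
function still sees the original configuration. -/
theorem List.foldl_update_of_pairwise_dependsOn {ι α : Type*} [DecidableEq ι]
    (f : ι → (ι → α) → α) {l : List ι}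
    (hl : l.Pairwise fun i j => DependsOn (f j) {i}ᶜ) (c : ι → α) :
    l.foldl (fun c i => update c i (f i c)) c = fun j => if j ∈ l then f j c else c j := by
  induction l generalizing c with
  | nil => simp
  | cons i l ih =>
    obtain ⟨hi, hl⟩ := List.pairwise_cons.1 hl
    rw [List.foldl_cons, ih hl]
    funext j
    by_cases hj : j ∈ l
    · simp only [hj, if_true, List.mem_cons, or_true]
      exact hi j hj fun m hm => update_of_ne hm _ _
    · by_cases hji : j = i
      · subst hji
        simp [hj]
      · simp [hj, hji]

theorem stmt_17 (n : ℕ) (f : Fin n → (Fin n → Bool) → Bool) (π : Equiv.Perm (Fin n))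
    -- f (π j) does not depend on any of the coordinates π 1, …, π (j-1)
    (hdep : ∀ j j' : Fin n, j' < j →
      ∀ c c' : Fin n → Bool, (∀ m : Fin n, m ≠ π j' → c m = c' m) →
        f (π j) c = f (π j) c') :
    ∀ c : Fin n → Bool, seqUpdate f π c = fun i => f i c := by
  intro c
  have hpairwise : (List.ofFn fun j => π j).Pairwise fun i j => DependsOn (f j) {i}ᶜ :=
    List.pairwise_ofFn.2 fun j' j hlt c c' => hdep j j' hlt c c'
  rw [seqUpdate, List.foldl_update_of_pairwise_dependsOn f hpairwise]
  funext i
  simp [List.mem_ofFn']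
end
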